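/- arXiv:1208.3139 — 3 statements merged into one kernel-verified Lean document; each statement's English description precedes it below -/
import Mathlib

section
/- Let T be a Krull–Schmidt triangulated category and let A → B₁ ⊕ B₂ → C → A[1] be a distinguished triangle with maps u = [u₁, u₂]ᵀ : A → B₁ ⊕ B₂ and v = [v₁, v₂] : B₁ ⊕ B₂ → C. If C is indecomposable and both v₁ and v₂ are nonzero, then Hom(A, C) ≠ 0; in fact v₁ ∘ u₁ ≠ 0. -/
open CategoryTheory CategoryTheory.Limits CategoryTheory.Pretriangulated

/-- An object of a category is indecomposable if it is nonzero and any biproduct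
decomposition of it has a zero summand. -/
def CatIndecomposable {C : Type*} [Category C] [Preadditive C] [HasBinaryBiproducts C]
    (X : C) : Prop :=
  ¬ IsZero X ∧ ∀ (Y Z : C), Nonempty (X ≅ Y ⊞ Z) → IsZero Y ∨ IsZero Z

/-- A Krull–Schmidt category: every indecomposable object has a local endomorphism
ring (so that every object decomposes into indecomposables with local endomorphism
rings). -/
def IsKrullSchmidtCat (C : Type*) [Category C] [Preadditive C] [HasBinaryBiproducts C] :
    Prop :=
  ∀ X : C, CatIndecomposable X → IsLocalRing (End X)

/-!
If `u₁ ≫ v₁ = 0`, then `[v₁, 0]` vanishes on `A`, so it factors through `v = [v₁, v₂]` as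
`v ≫ e` for an endomorphism `e` of `C`; thus `v₁ ≫ e = v₁` and `v₂ ≫ e = 0`. As `End C` is
local, either `e` is invertible, forcing `v₂ = 0`, or `1 - e` is, forcing `v₁ = 0`.
-/

namespace CategoryTheory

lemma eq_zero_or_eq_zero_of_comp_eq_self_of_comp_eq_zero {C : Type*} [Category C]
    [Preadditive C] {X Y Z : C} [IsLocalRing (End X)] {f : Y ⟶ X} {g : Z ⟶ X} {e : End X}
    (hf : f ≫ e = f) (hg : g ≫ e = 0) : f = 0 ∨ g = 0 := by
  rcases IsLocalRing.isUnit_or_isUnit_of_add_one (add_sub_cancel e 1) with he | he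
  · have : IsIso e := (isUnit_iff_isIso e).1 he
    exact Or.inr ((cancel_mono e).1 (by rw [hg, zero_comp]))
  · have : IsIso (1 - e) := (isUnit_iff_isIso _).1 he
    refine Or.inl ((cancel_mono (1 - e)).1 ?_)
    rw [End.one_def, Preadditive.comp_sub, Category.comp_id, hf, sub_self, zero_comp]

namespace Pretriangulated

lemma exists_comp_eq_self_and_comp_eq_zero_of_distTriang {C : Type*} [Category C]
    [Preadditive C] [HasZeroObject C] [HasBinaryBiproducts C] [HasShift C ℤ]
    [∀ n : ℤ, (shiftFunctor C n).Additive] [Pretriangulated C]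
    {A B₁ B₂ X : C} {u₁ : A ⟶ B₁} {u₂ : A ⟶ B₂} {v₁ : B₁ ⟶ X} {v₂ : B₂ ⟶ X}
    {w : X ⟶ A⟦(1 : ℤ)⟧}
    (hdist : Triangle.mk (biprod.lift u₁ u₂) (biprod.desc v₁ v₂) w ∈ distTriang C)
    (h : u₁ ≫ v₁ = 0) : ∃ e : End X, v₁ ≫ e = v₁ ∧ v₂ ≫ e = 0 := by
  obtain ⟨e, he⟩ : ∃ e : X ⟶ X, biprod.desc v₁ 0 = biprod.desc v₁ v₂ ≫ e :=
    Triangle.yoneda_exact₂ _ hdist _ (show biprod.lift u₁ u₂ ≫ biprod.desc v₁ 0 = 0 by simp [h])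
  exact ⟨e, by simpa using (biprod.inl ≫= he).symm, by simpa using (biprod.inr ≫= he).symm⟩

end Pretriangulated

end CategoryTheory

/-- Lemma 2.1: if `A → B₁ ⊕ B₂ → C → A[1]` is a distinguished triangle in a
Krull–Schmidt triangulated category, `C` is indecomposable and both components
`v₁, v₂` of the map `B₁ ⊕ B₂ → C` are nonzero, then `v₁ ∘ u₁ ≠ 0`; in particular
`Hom(A, C) ≠ 0`. -/
theorem stmt0 {C : Type*} [Category C] [Preadditive C] [HasZeroObject C]
    [HasBinaryBiproducts C] [HasShift C ℤ]
    [∀ n : ℤ, (shiftFunctor C n).Additive] [Pretriangulated C]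
    (hKS : IsKrullSchmidtCat C)
    (A B₁ B₂ Cobj : C) (u₁ : A ⟶ B₁) (u₂ : A ⟶ B₂) (v₁ : B₁ ⟶ Cobj) (v₂ : B₂ ⟶ Cobj)
    (w : Cobj ⟶ A⟦(1:ℤ)⟧)
    (hdist : Triangle.mk (biprod.lift u₁ u₂) (biprod.desc v₁ v₂) w ∈ distTriang C)
    (hC : CatIndecomposable Cobj) (hv₁ : v₁ ≠ 0) (hv₂ : v₂ ≠ 0) :
    u₁ ≫ v₁ ≠ 0 ∧ ∃ f : A ⟶ Cobj, f ≠ 0 := by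
  have : IsLocalRing (End Cobj) := hKS Cobj hC
  have hcomp : u₁ ≫ v₁ ≠ 0 := by
    intro h
    obtain ⟨e, he₁, he₂⟩ := exists_comp_eq_self_and_comp_eq_zero_of_distTriang hdist h
    exact (eq_zero_or_eq_zero_of_comp_eq_self_of_comp_eq_zero he₁ he₂).elim hv₁ hv₂
  exact ⟨hcomp, u₁ ≫ v₁, hcomp⟩
end

section
/- Let Γ be a graded algebra and M an indecomposable non-projective graded Γ-module. If there exists a degree-zero endomorphism f : M → M that is neither zero nor an isomorphism, with image N and cokernel T of the inclusion N ↪ M, and if the induced map Ext¹(T, M)₀ → Ext¹(T, N)₀ is surjective, then there is a non-split short exact sequence of graded modules 0 → M → N ⊕ X → M → 0 for some graded module X; hence if Ext¹(M, M)₀ = 0 this yields a contradiction with the Krull–Remak–Schmidt theorem since N ≠ 0 has smaller length than M. -/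
/-!
Lifting the extension `0 → N → M → T → 0` along `e` gives an extension `0 → M → X → T → 0`
with a map `g : X → M` over `T` restricting to `f` on `M`; the pullback of `ι` and `g` is then
an extension `0 → M → N ⊕ X → M → 0`.
A splitting of it would, by Fitting's lemma for the indecomposable finite-length module `M`,
either make `f` injective or split `0 → M → X → T → 0`, hence also `0 → N → M → T → 0`;
both contradict `f` being neither zero nor an isomorphism.
-/

noncomputable section

open DirectSum

/-- A `ℤ`-graded module over a `ℂ`-algebra `A` graded by `𝒜 : ℕ → Submodule ℂ A`,
with all structure maps compatible with the gradings. -/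
structure GrMod {A : Type} [Ring A] [Algebra ℂ A] (𝒜 : ℕ → Submodule ℂ A) where
  M : Type
  [acg : AddCommGroup M]
  [modA : Module A M]
  [modC : Module ℂ M]
  [tower : IsScalarTower ℂ A M]
  gr : ℤ → Submodule ℂ M
  decomp : DirectSum.IsInternal gr
  smul_mem' : ∀ (d : ℕ) (i : ℤ) (s : A), s ∈ 𝒜 d → ∀ m ∈ gr i, s • m ∈ gr (i + d)

attribute [instance] GrMod.acg GrMod.modA GrMod.modC GrMod.tower

variable {A : Type} [Ring A] [Algebra ℂ A] {𝒜 : ℕ → Submodule ℂ A}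

/-- Degree-zero graded homomorphisms between graded modules. -/
@[ext] structure GrHom (X Y : GrMod 𝒜) where
  toFun : X.M →ₗ[A] Y.M
  map_gr : ∀ i, ∀ m ∈ X.gr i, toFun m ∈ Y.gr i

namespace GrHom

def comp {X Y Z : GrMod 𝒜} (g : GrHom Y Z) (f : GrHom X Y) : GrHom X Z :=
  ⟨g.toFun ∘ₗ f.toFun, fun i m hm => g.map_gr i _ (f.map_gr i m hm)⟩

def id (X : GrMod 𝒜) : GrHom X X := ⟨LinearMap.id, fun _ _ hm => hm⟩

def zero (X Y : GrMod 𝒜) : GrHom X Y := ⟨0, fun i _ _ => (Y.gr i).zero_mem⟩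

def sub {X Y : GrMod 𝒜} (f g : GrHom X Y) : GrHom X Y :=
  ⟨f.toFun - g.toFun, fun i m hm => by
    simpa using sub_mem (f.map_gr i m hm) (g.map_gr i m hm)⟩

end GrHom

/-- `0 → X → Y → Z → 0` is a short exact sequence of graded modules. -/
structure IsSES {X Y Z : GrMod 𝒜} (f : GrHom X Y) (g : GrHom Y Z) : Prop where
  inj : Function.Injective f.toFun
  surj : Function.Surjective g.toFun
  exact : LinearMap.range f.toFun = LinearMap.ker g.toFun

/-- A short exact sequence of graded modules splits (via a degree-zero retraction). -/
def Splits {X Y Z : GrMod 𝒜} (f : GrHom X Y) (g : GrHom Y Z) : Prop :=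
  ∃ r : GrHom Y X, r.comp f = GrHom.id X

/-- Vanishing of the degree-zero part of `Ext¹(Z, X)`:
every short exact sequence `0 → X → Y → Z → 0` of graded modules splits. -/
def Ext1Zero (Z X : GrMod 𝒜) : Prop :=
  ∀ (Y : GrMod 𝒜) (f : GrHom X Y) (g : GrHom Y Z), IsSES f g → Splits f g

/-- A graded free module all of whose basis elements lie in degree `d`. -/
def IsFreeGenInDegree (P : GrMod 𝒜) (d : ℤ) : Prop :=
  ∃ (ι : Type) (b : Module.Basis ι A P.M), ∀ j, b j ∈ P.gr d

/-- A graded free module (a free module with a homogeneous basis). -/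
def IsGradedFree (P : GrMod 𝒜) : Prop :=
  ∃ (ι : Type) (b : Module.Basis ι A P.M) (d : ι → ℤ), ∀ j, b j ∈ P.gr (d j)

/-- `X` has a linear presentation: a graded free presentation `P₁ → P₀ → X → 0`
with `P₀` generated in degree `0` and `P₁` generated in degree `1`. -/
def HasLinearPresentation (X : GrMod 𝒜) : Prop :=
  ∃ (P₁ P₀ : GrMod 𝒜) (f : GrHom P₁ P₀) (p : GrHom P₀ X),
    IsFreeGenInDegree P₁ 1 ∧ IsFreeGenInDegree P₀ 0 ∧
    Function.Surjective p.toFun ∧ LinearMap.range f.toFun = LinearMap.ker p.toFun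

/-- `X` is a linear (Koszul) module: it has a graded free resolution whose `k`-th
term is generated in degree `k`. -/
def IsLinearModule (X : GrMod 𝒜) : Prop :=
  ∃ (P : ℕ → GrMod 𝒜) (d : ∀ k, GrHom (P (k+1)) (P k)) (p : GrHom (P 0) X),
    (∀ k, IsFreeGenInDegree (P k) (k : ℤ)) ∧
    Function.Surjective p.toFun ∧
    LinearMap.range (d 0).toFun = LinearMap.ker p.toFun ∧
    ∀ k, LinearMap.range (d (k+1)).toFun = LinearMap.ker (d k).toFun

/-- `Y` is the graded shift `X(i)` of `X`, i.e. `Y_k = X_{k+i}`. -/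
def IsGradedShiftOf (Y X : GrMod 𝒜) (i : ℤ) : Prop :=
  ∃ e : Y.M ≃ₗ[A] X.M,
    (∀ k, ∀ m ∈ Y.gr k, e m ∈ X.gr (k + i)) ∧
    (∀ k, ∀ m ∈ X.gr (k + i), e.symm m ∈ Y.gr k)

/-- `ι : T → X` realizes `T` as the truncation `X_{≥ i}` of `X`. -/
structure IsTruncation (X T : GrMod 𝒜) (i : ℤ) (ι : GrHom T X) : Prop where
  inj : Function.Injective ι.toFun
  low : ∀ k, k < i → T.gr k = ⊥
  onto : ∀ k, i ≤ k → ∀ m ∈ X.gr k, ∃ t ∈ T.gr k, ι.toFun t = m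

/-- `C` is a semisimple graded module concentrated in the single degree `m`. -/
def IsSemisimpleInDegree (C : GrMod 𝒜) (m : ℤ) : Prop :=
  (∀ k, k ≠ m → C.gr k = ⊥) ∧
  ∀ (d : ℕ), 1 ≤ d → ∀ s ∈ 𝒜 d, ∀ x : C.M, s • x = 0

/-- A graded submodule of a graded module. -/
def IsGradedSubmodule (X : GrMod 𝒜) (U : Submodule A X.M) : Prop :=
  U.restrictScalars ℂ = ⨆ i, (U.restrictScalars ℂ ⊓ X.gr i)

/-- Indecomposability of a graded module. -/
def GrIndecomposable (X : GrMod 𝒜) : Prop :=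
  (∃ x : X.M, x ≠ 0) ∧
  ∀ U V : Submodule A X.M, IsGradedSubmodule X U → IsGradedSubmodule X V →
    IsCompl U V → U = ⊥ ∨ V = ⊥

/-- A graded isomorphism. -/
def IsGrIso {X Y : GrMod 𝒜} (f : GrHom X Y) : Prop :=
  Function.Bijective f.toFun ∧ ∀ i, ∀ m ∈ Y.gr i, ∃ x ∈ X.gr i, f.toFun x = m

/-- `Z` is a (first) syzygy of `B`: there is a short exact sequence `0 → Z → P → B → 0`
with `P` graded free. -/
def IsSyzygyOf (Z B : GrMod 𝒜) : Prop :=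
  ∃ (P : GrMod 𝒜) (j : GrHom Z P) (p : GrHom P B), IsGradedFree P ∧ IsSES j p

/-- `Z` is a `k`-th syzygy of `B`. -/
def IsIterSyzygyOf : ℕ → GrMod 𝒜 → GrMod 𝒜 → Prop
  | 0, Z, B => ∃ f : GrHom Z B, IsGrIso f
  | (k+1), Z, B => ∃ W : GrMod 𝒜, IsSyzygyOf Z W ∧ IsIterSyzygyOf k W B

/-- A degree-zero map factors through a graded free module, i.e. it vanishes in the
stable category of graded modules. -/
def FactorsThroughFree {X Y : GrMod 𝒜} (f : GrHom X Y) : Prop :=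
  ∃ (F : GrMod 𝒜) (g : GrHom X F) (h : GrHom F Y), IsGradedFree F ∧ h.comp g = f

/-- The polynomial ring `S = ℂ[x₀, …, xₙ]`. -/
abbrev PolyRing (n : ℕ) := MvPolynomial (Fin (n+1)) ℂ

/-- The standard grading of the polynomial ring. -/
abbrev polyGrading (n : ℕ) : ℕ → Submodule ℂ (PolyRing n) :=
  fun d => MvPolynomial.homogeneousSubmodule (Fin (n+1)) ℂ d

/-- The exterior algebra `R = Λ(x₀, …, xₙ)` over `ℂ`. -/
abbrev ExtAlg (n : ℕ) := ExteriorAlgebra ℂ (Fin (n+1) → ℂ)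

/-- The standard grading of the exterior algebra. -/
abbrev extGrading (n : ℕ) : ℕ → Submodule ℂ (ExtAlg n) :=
  fun d => LinearMap.range (ExteriorAlgebra.ι ℂ :
    (Fin (n+1) → ℂ) →ₗ[ℂ] ExtAlg n) ^ d

end

open DirectSum

namespace Submodule

variable {R M M' ι : Type*} [Semiring R] [AddCommMonoid M] [Module R M]
  [AddCommMonoid M'] [Module R M']

theorem iSup_prod (p : ι → Submodule R M) (q : ι → Submodule R M') :
    ⨆ i, (p i).prod (q i) = (⨆ i, p i).prod (⨆ i, q i) := by
  refine le_antisymm (iSup_le fun i => prod_mono (le_iSup p i) (le_iSup q i)) ?_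
  have hp : (⨆ i, p i).prod ⊥ ≤ ⨆ i, (p i).prod (q i) := by
    rw [← map_inl, map_iSup]
    exact iSup_mono fun i => (map_inl (p i)).trans_le (prod_mono le_rfl bot_le)
  have hq : (⊥ : Submodule R M).prod (⨆ i, q i) ≤ ⨆ i, (p i).prod (q i) := by
    rw [← map_inr, map_iSup]
    exact iSup_mono fun i => (map_inr (q i)).trans_le (prod_mono bot_le le_rfl)
  simpa only [prod_sup_prod, sup_bot_eq, bot_sup_eq] using sup_le hp hq

end Submodule

theorem iSupIndep.submodule_prod {R M M' ι : Type*} [Semiring R] [AddCommMonoid M] [Module R M]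
    [AddCommMonoid M'] [Module R M'] {p : ι → Submodule R M} {q : ι → Submodule R M'}
    (hp : iSupIndep p) (hq : iSupIndep q) : iSupIndep fun i => (p i).prod (q i) := by
  rw [iSupIndep_def] at *
  intro i
  have hle : ⨆ j, ⨆ (_ : j ≠ i), (p j).prod (q j) ≤
      (⨆ j, ⨆ (_ : j ≠ i), p j).prod (⨆ j, ⨆ (_ : j ≠ i), q j) :=
    iSup₂_le fun j hj => Submodule.prod_mono (le_iSup₂ (f := fun j _ => p j) j hj)
      (le_iSup₂ (f := fun j _ => q j) j hj)
  refine Disjoint.mono_right hle ?_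
  rw [disjoint_iff, Submodule.prod_inf_prod, (hp i).eq_bot, (hq i).eq_bot, Submodule.prod_bot]

theorem DirectSum.IsInternal.submodule_prod {R M M' ι : Type*} [Ring R] [DecidableEq ι]
    [AddCommGroup M] [Module R M] [AddCommGroup M'] [Module R M']
    {p : ι → Submodule R M} {q : ι → Submodule R M'}
    (hp : IsInternal p) (hq : IsInternal q) : IsInternal fun i => (p i).prod (q i) := by
  rw [isInternal_submodule_iff_iSupIndep_and_iSup_eq_top] at *
  refine ⟨hp.1.submodule_prod hq.1, ?_⟩
  rw [Submodule.iSup_prod, hp.2, hq.2, Submodule.prod_top]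

theorem LinearMap.isCompl_range_of_exact {R N M T X : Type*} [Ring R]
    [AddCommGroup N] [Module R N] [AddCommGroup M] [Module R M] [AddCommGroup T] [Module R T]
    [AddCommGroup X] [Module R X] {ι : N →ₗ[R] M} {π : M →ₗ[R] T} {a : M →ₗ[R] X}
    {b : X →ₗ[R] T} (hιπ : range ι = ker π) (hab : range a = ker b) (hb : Function.Surjective b)
    {p : X →ₗ[R] M} (hpa : p ∘ₗ a = 0) (hπp : π ∘ₗ p = b) :
    IsCompl (range ι) (range p) := by
  have hπp' (x : X) : π (p x) = b x := congr($hπp x)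
  constructor
  · rw [Submodule.disjoint_def]
    rintro _ ⟨n, rfl⟩ ⟨x, hx⟩
    have hbx : b x = 0 := by
      rw [← hπp', hx, ← mem_ker, ← hιπ]
      exact ⟨n, rfl⟩
    obtain ⟨m, rfl⟩ : x ∈ range a := hab ▸ hbx
    rw [← hx]
    exact congr($hpa m)
  · rw [codisjoint_iff_le_sup]
    intro m _
    obtain ⟨x, hx⟩ := hb (π m)
    obtain ⟨n, hn⟩ : m - p x ∈ range ι := by
      rw [hιπ, mem_ker, map_sub, hπp', hx, sub_self]
    rw [← sub_add_cancel m (p x), ← hn]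
    exact Submodule.add_mem_sup ⟨n, rfl⟩ ⟨x, rfl⟩

noncomputable section

variable {A : Type} [Ring A] [Algebra ℂ A] {𝒜 : ℕ → Submodule ℂ A}

namespace GrMod

instance (X : GrMod 𝒜) : Decomposition X.gr := X.decomp.chooseDecomposition

protected def prod (N X : GrMod 𝒜) : GrMod 𝒜 where
  M := N.M × X.M
  gr i := (N.gr i).prod (X.gr i)
  decomp := N.decomp.submodule_prod X.decomp
  smul_mem' d i s hs _ hm :=
    ⟨N.smul_mem' d i s hs _ hm.1, X.smul_mem' d i s hs _ hm.2⟩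

theorem isGradedSubmodule_of_decompose_mem (X : GrMod 𝒜) {U : Submodule A X.M}
    (hU : ∀ m ∈ U, ∀ i, (decompose X.gr m i : X.M) ∈ U) : IsGradedSubmodule X U := by
  classical
  refine le_antisymm (fun m hm => ?_) (iSup_le fun _ => inf_le_left)
  rw [← sum_support_decompose X.gr m]
  exact Submodule.sum_mem _ fun i _ =>
    Submodule.mem_iSup_of_mem i ⟨hU m hm i, (decompose X.gr m i).2⟩

end GrMod

namespace GrHom

variable {X Y Z : GrMod 𝒜}

theorem decompose_apply (φ : GrHom X Y) (m : X.M) (i : ℤ) :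
    (decompose Y.gr (φ.toFun m) i : Y.M) = φ.toFun (decompose X.gr m i) := by
  induction m using Decomposition.inductionOn X.gr with
  | zero => simp
  | @homogeneous j m =>
    rw [decompose_coe, decompose_of_mem _ (φ.map_gr j m m.2)]
    by_cases hji : j = i
    · subst hji; simp
    · simp [of_eq_of_ne _ _ _ (Ne.symm hji)]
  | add m m' hm hm' => simp [decompose_add, hm, hm']

theorem isGradedSubmodule_range (φ : GrHom X Y) :
    IsGradedSubmodule Y (LinearMap.range φ.toFun) :=
  Y.isGradedSubmodule_of_decompose_mem <| by
    rintro _ ⟨m, rfl⟩ i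
    exact ⟨_, (φ.decompose_apply m i).symm⟩

theorem isGradedSubmodule_ker (φ : GrHom X Y) :
    IsGradedSubmodule X (LinearMap.ker φ.toFun) :=
  X.isGradedSubmodule_of_decompose_mem fun m hm i => by
    rw [LinearMap.mem_ker, ← decompose_apply, LinearMap.mem_ker.mp hm]
    simp

def invOfBijective (φ : GrHom X Y) (hφ : Function.Bijective φ.toFun) : GrHom Y X where
  toFun := (LinearEquiv.ofBijective φ.toFun hφ).symm
  map_gr i y hy := by
    set x := (LinearEquiv.ofBijective φ.toFun hφ).symm y
    have hx : φ.toFun x = y := (LinearEquiv.ofBijective φ.toFun hφ).apply_symm_apply y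
    have : (decompose X.gr x i : X.M) = x := hφ.1 <| by
      rw [← decompose_apply, hx, decompose_of_mem_same _ hy]
    show x ∈ X.gr i
    exact this ▸ (decompose X.gr x i).2

theorem invOfBijective_comp (φ : GrHom X Y) (hφ : Function.Bijective φ.toFun) :
    (φ.invOfBijective hφ).comp φ = GrHom.id X :=
  GrHom.ext <| LinearMap.ext (LinearEquiv.ofBijective φ.toFun hφ).symm_apply_apply

def pow (u : GrHom X X) (n : ℕ) : GrHom X X where
  toFun := u.toFun ^ n
  map_gr := by
    induction n with
    | zero => exact fun _ _ hm => hm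
    | succ n ih =>
      intro i m hm
      rw [pow_succ, Module.End.mul_apply]
      exact ih i _ (u.map_gr i m hm)

variable (N X : GrMod 𝒜)

def inl : GrHom N (N.prod X) := ⟨LinearMap.inl A N.M X.M, fun i _ hm => ⟨hm, (X.gr i).zero_mem⟩⟩

def inr : GrHom X (N.prod X) := ⟨LinearMap.inr A N.M X.M, fun i _ hm => ⟨(N.gr i).zero_mem, hm⟩⟩

def fst : GrHom (N.prod X) N := ⟨LinearMap.fst A N.M X.M, fun _ _ hm => hm.1⟩

def snd : GrHom (N.prod X) X := ⟨LinearMap.snd A N.M X.M, fun _ _ hm => hm.2⟩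

variable {N X}

protected def prod (f : GrHom Z N) (g : GrHom Z X) : GrHom Z (N.prod X) :=
  ⟨f.toFun.prod g.toFun, fun i m hm => ⟨f.map_gr i m hm, g.map_gr i m hm⟩⟩

theorem prod_apply_eq_inl_add_inr (f : GrHom Z N) (g : GrHom Z X) (z : Z.M) :
    (f.prod g).toFun z = (inl N X).toFun (f.toFun z) + (inr N X).toFun (g.toFun z) :=
  Prod.ext (add_zero _).symm (zero_add _).symm

end GrHom

namespace IsSES

variable {X Y Z : GrMod 𝒜} {f : GrHom X Y} {g : GrHom Y Z}

theorem apply_apply_eq_zero (h : IsSES f g) (x : X.M) : g.toFun (f.toFun x) = 0 :=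
  LinearMap.mem_ker.mp (h.exact ▸ ⟨x, rfl⟩)

theorem exists_of_apply_eq_zero (h : IsSES f g) {y : Y.M} (hy : g.toFun y = 0) :
    ∃ x, f.toFun x = y :=
  LinearMap.mem_range.mp (h.exact ▸ LinearMap.mem_ker.mpr hy)

end IsSES

variable {M N T X : GrMod 𝒜} {ι : GrHom N M} {π : GrHom M T} {a : GrHom M X} {b : GrHom X T}
  {e : GrHom M N} {g : GrHom X M}

/-- The kernel of `ι - g` is the pullback of `ι` and `g`, which `(e, a)` identifies with `M`. -/
theorem isSES_prod_sub (hT : IsSES ι π) (hX : IsSES a b) (hga : g.comp a = ι.comp e)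
    (hbg : π.comp g = b) :
    IsSES (e.prod a) ((ι.comp (GrHom.fst N X)).sub (g.comp (GrHom.snd N X))) := by
  have hga' (m : M.M) : g.toFun (a.toFun m) = ι.toFun (e.toFun m) := congr(GrHom.toFun $hga m)
  have hbg' (x : X.M) : π.toFun (g.toFun x) = b.toFun x := congr(GrHom.toFun $hbg x)
  refine ⟨fun _ _ h => hX.inj congr($h.2), fun m => ?_, ?_⟩
  · obtain ⟨x, hx⟩ := hX.surj (π.toFun m)
    obtain ⟨n, hn⟩ := hT.exists_of_apply_eq_zero (y := m - g.toFun x) <| by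
      rw [map_sub, hbg', hx, sub_self]
    refine ⟨(n, -x), ?_⟩
    change ι.toFun n - g.toFun (-x) = m
    rw [map_neg, sub_neg_eq_add, hn, sub_add_cancel]
  · refine le_antisymm ?_ fun z hz => ?_
    · rintro _ ⟨m, rfl⟩
      exact sub_eq_zero.mpr (hga' m).symm
    · have hz' : ι.toFun z.1 = g.toFun z.2 := sub_eq_zero.mp hz
      obtain ⟨m, hm⟩ := hX.exists_of_apply_eq_zero (y := z.2) <| by
        rw [← hbg', ← hz', hT.apply_apply_eq_zero]
      refine ⟨m, Prod.ext (hT.inj ?_) hm⟩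
      change ι.toFun (e.toFun m) = ι.toFun z.1
      rw [hz', ← hm, hga']

theorem GrIndecomposable.bijective_or_isNilpotent (hM : GrIndecomposable M)
    [IsNoetherian A M.M] [IsArtinian A M.M] (u : GrHom M M) :
    Function.Bijective u.toFun ∨ IsNilpotent u.toFun := by
  obtain ⟨n, hn, hn0⟩ := ((LinearMap.eventually_isCompl_ker_pow_range_pow u.toFun).and
    (Filter.eventually_ne_atTop 0)).exists
  rcases hM.2 _ _ (u.pow n).isGradedSubmodule_ker (u.pow n).isGradedSubmodule_range hn with h | h
  · exact .inl <| IsArtinian.bijective_of_injective_endomorphism _ <|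
      Module.End.injective_of_iterate_injective hn0 (LinearMap.ker_eq_bot.mp h)
  · exact .inr ⟨n, LinearMap.range_eq_bot.mp h⟩

/-- If `0 → M → X → T → 0` splits, then so does `0 → N → M → T → 0`, through
`g - g ∘ a ∘ s : X → M`, which vanishes on `M` and lifts `b`. -/
theorem GrIndecomposable.range_eq_bot_or_top_of_retraction (hM : GrIndecomposable M)
    (hT : IsSES ι π) (hX : IsSES a b) (hbg : π.comp g = b) {s : GrHom X M}
    (hs : s.comp a = GrHom.id M) :
    LinearMap.range ι.toFun = ⊥ ∨ LinearMap.range ι.toFun = ⊤ := by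
  have hbg' (x : X.M) : π.toFun (g.toFun x) = b.toFun x := congr(GrHom.toFun $hbg x)
  set p := g.sub (g.comp (a.comp s))
  have hpa : p.toFun ∘ₗ a.toFun = 0 := by
    ext m
    change g.toFun (a.toFun m) - g.toFun (a.toFun ((s.comp a).toFun m)) = 0
    rw [hs]
    exact sub_self _
  have hπp : π.toFun ∘ₗ p.toFun = b.toFun := by
    ext x
    change π.toFun (g.toFun x - g.toFun (a.toFun (s.toFun x))) = b.toFun x
    rw [map_sub, hbg', hbg', hX.apply_apply_eq_zero, sub_zero]
  have hcompl := LinearMap.isCompl_range_of_exact hT.exact hX.exact hX.surj hpa hπp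
  exact (hM.2 _ _ ι.isGradedSubmodule_range p.isGradedSubmodule_range hcompl).imp id
    fun (hp : LinearMap.range p.toFun = ⊥) => eq_top_of_isCompl_bot (hp ▸ hcompl)

/-- Write a retraction `r` of `(e, a)` as `r ∘ (e, a) = u + k ∘ a` with `u` factoring through `e`.
By Fitting's lemma either `u` is invertible, forcing `e` and hence `f = ι ∘ e` to be injective,
or `u` is nilpotent, so that `k ∘ a = 1 - u` is invertible and `a` splits. -/
theorem not_splits_prod_sub (hM : GrIndecomposable M) [IsNoetherian A M.M] [IsArtinian A M.M]
    (hT : IsSES ι π) (hX : IsSES a b) (hbg : π.comp g = b)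
    (he : Function.Surjective e.toFun) (hf0 : (ι.comp e).toFun ≠ 0)
    (hf : ¬ Function.Bijective (ι.comp e).toFun) :
    ¬ Splits (e.prod a) ((ι.comp (GrHom.fst N X)).sub (g.comp (GrHom.snd N X))) := by
  rintro ⟨r, hr⟩
  set u := (r.comp (GrHom.inl N X)).comp e
  set k := r.comp (GrHom.inr N X)
  have hka : (k.comp a).toFun = 1 - u.toFun := by
    ext m
    have hm : u.toFun m + k.toFun (a.toFun m) = m := by
      change r.toFun _ + r.toFun _ = m
      rw [← map_add, ← GrHom.prod_apply_eq_inl_add_inr]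
      exact congr(GrHom.toFun $hr m)
    exact eq_sub_of_add_eq' hm
  rcases hM.bijective_or_isNilpotent u with hu | hu
  · have he_inj : Function.Injective e.toFun :=
      hu.1.of_comp (f := (r.comp (GrHom.inl N X)).toFun)
    exact hf (IsArtinian.bijective_of_injective_endomorphism _ (hT.inj.comp he_inj))
  · have hk : Function.Bijective (k.comp a).toFun :=
      (Module.End.isUnit_iff _).mp (hka ▸ hu.isUnit_one_sub)
    have hs : ((k.comp a).invOfBijective hk |>.comp k).comp a = GrHom.id M :=
      (k.comp a).invOfBijective_comp hk
    rcases hM.range_eq_bot_or_top_of_retraction hT hX hbg hs with hι | hι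
    · exact hf0 (LinearMap.ext fun m => (Submodule.mem_bot A).mp (hι ▸ ⟨e.toFun m, rfl⟩))
    · have hsurj : Function.Surjective (ι.comp e).toFun :=
        (LinearMap.range_eq_top.mp hι).comp he
      exact hf ⟨IsNoetherian.injective_of_surjective_endomorphism _ hsurj, hsurj⟩

end

theorem stmt2_general {A : Type} [Ring A] [Algebra ℂ A] {𝒜 : ℕ → Submodule ℂ A}
    (M : GrMod 𝒜) (hlen : IsFiniteLength A M.M)
    (hindec : GrIndecomposable M)
    (f : GrHom M M) (hf0 : f.toFun ≠ 0) (hfni : ¬ Function.Bijective f.toFun)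
    (N : GrMod 𝒜) (e : GrHom M N) (ι : GrHom N M)
    (he : Function.Surjective e.toFun) (hfact : ι.comp e = f)
    (T : GrMod 𝒜) (π : GrHom M T) (hT : IsSES ι π)
    (hsurjExt : ∀ (Y : GrMod 𝒜) (a : GrHom N Y) (b : GrHom Y T), IsSES a b →
      ∃ (X : GrMod 𝒜) (a' : GrHom M X) (b' : GrHom X T) (g : GrHom X Y),
        IsSES a' b' ∧ g.comp a' = a.comp e ∧ b.comp g = b') :
    (∃ (E : GrMod 𝒜) (a : GrHom M E) (b : GrHom E M),
      IsSES a b ∧ ¬ Splits a b ∧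
      ∃ (X : GrMod 𝒜) (i₁ : GrHom N E) (i₂ : GrHom X E)
        (p₁ : GrHom E N) (p₂ : GrHom E X),
        p₁.comp i₁ = GrHom.id N ∧ p₂.comp i₂ = GrHom.id X ∧
        p₁.comp i₂ = GrHom.zero X N ∧ p₂.comp i₁ = GrHom.zero N X ∧
        ∀ m : E.M, i₁.toFun (p₁.toFun m) + i₂.toFun (p₂.toFun m) = m) ∧
    ¬ Ext1Zero M M := by
  obtain ⟨_, _⟩ := isFiniteLength_iff_isNoetherian_isArtinian.mp hlen
  subst hfact
  obtain ⟨X, a, b, g, hX, hga, hbg⟩ := hsurjExt M ι π hT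
  have hses := isSES_prod_sub hT hX hga hbg
  have hns := not_splits_prod_sub hindec hT hX hbg he hf0 hfni
  exact ⟨⟨N.prod X, _, _, hses, hns, X, GrHom.inl N X, GrHom.inr N X, GrHom.fst N X,
    GrHom.snd N X, rfl, rfl, rfl, rfl, fun _ => Prod.fst_add_snd _⟩,
    fun hext => hns (hext _ _ _ hses)⟩

/-- Let `Γ` be a graded algebra and `M` an indecomposable non-projective graded
`Γ`-module of finite length.  Suppose `f : M → M` is a degree-zero endomorphism
which is neither zero nor an isomorphism, with image `N` (factored as a graded
epimorphism `e : M ↠ N` followed by a graded monomorphism `ι : N ↪ M`) and with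
`T` the cokernel of `ι : N ↪ M`.  If the induced map
`Ext¹(T, M)₀ → Ext¹(T, N)₀` is surjective (every extension of `T` by `N` is the
pushout along `e` of an extension of `T` by `M`), then there is a non-split short
exact sequence `0 → M → E → M → 0` of graded modules where `E ≅ N ⊕ X`; hence
`Ext¹(M, M)₀ ≠ 0`. -/
theorem stmt2 {A : Type} [Ring A] [Algebra ℂ A] {𝒜 : ℕ → Submodule ℂ A}
    (M : GrMod 𝒜) (hlen : IsFiniteLength A M.M)
    (hindec : GrIndecomposable M) (hnproj : ¬ Module.Projective A M.M)
    (f : GrHom M M) (hf0 : f.toFun ≠ 0) (hfni : ¬ Function.Bijective f.toFun)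
    (N : GrMod 𝒜) (e : GrHom M N) (ι : GrHom N M)
    (he : Function.Surjective e.toFun) (hfact : ι.comp e = f)
    (T : GrMod 𝒜) (π : GrHom M T) (hT : IsSES ι π)
    (hsurjExt : ∀ (Y : GrMod 𝒜) (a : GrHom N Y) (b : GrHom Y T), IsSES a b →
      ∃ (X : GrMod 𝒜) (a' : GrHom M X) (b' : GrHom X T) (g : GrHom X Y),
        IsSES a' b' ∧ g.comp a' = a.comp e ∧ b.comp g = b') :
    (∃ (E : GrMod 𝒜) (a : GrHom M E) (b : GrHom E M),
      IsSES a b ∧ ¬ Splits a b ∧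
      ∃ (X : GrMod 𝒜) (i₁ : GrHom N E) (i₂ : GrHom X E)
        (p₁ : GrHom E N) (p₂ : GrHom E X),
        p₁.comp i₁ = GrHom.id N ∧ p₂.comp i₂ = GrHom.id X ∧
        p₁.comp i₂ = GrHom.zero X N ∧ p₂.comp i₁ = GrHom.zero N X ∧
        ∀ m : E.M, i₁.toFun (p₁.toFun m) + i₂.toFun (p₂.toFun m) = m) ∧
    ¬ Ext1Zero M M :=
  stmt2_general M hlen hindec f hf0 hfni N e ι he hfact T π hT hsurjExt
end

section
/- Let S = ℂ[x₀, …, xₙ] with graded maximal ideal J, and let 0 → M → E → N → 0 be a short exact sequence of graded S-modules, each having a linear presentation. Then the sequence splits if and only if the induced sequence 0 → M/J²M → E/J²E → N/J²N → 0 of S/J²-modules splits. -/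
/-- The graded maximal ideal `J = (x₀, …, xₙ)` of the polynomial ring. -/
noncomputable def polyJ (n : ℕ) : Ideal (PolyRing n) :=
  Ideal.span (Set.range MvPolynomial.X)

/-- The submodule `J²X` of a graded module `X` over the polynomial ring. -/
noncomputable def JsqSub (n : ℕ) (X : GrMod (polyGrading n)) :
    Submodule (PolyRing n) X.M :=
  (polyJ n ^ 2) • (⊤ : Submodule (PolyRing n) X.M)

/-- The map `X/J²X → Y/J²Y` induced by a degree-zero graded homomorphism. -/
noncomputable def redMap {n : ℕ} {X Y : GrMod (polyGrading n)} (f : GrHom X Y) :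
    (X.M ⧸ JsqSub n X) →ₗ[PolyRing n] (Y.M ⧸ JsqSub n Y) :=
  Submodule.mapQ _ _ f.toFun (by
    refine Submodule.smul_le.2 fun s hs m _ => ?_
    simp only [Submodule.mem_comap, map_smul]
    exact Submodule.smul_mem_smul hs trivial)

/-!
For a module `X` generated in degree `0`, `X_k ⊆ J^k X` while `J^d X` has no component in
degrees `< d`, so `X/J²X` is `X₀ ⊕ X₁`. Lift `ρ` on the degree-`0` basis of `P₀ ↠ E` and keep
only the degree-`0` parts of the lifts: this gives a graded `τ : P₀ → M` agreeing with `ρ`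
modulo `J²` in degrees `0` and `1`. The relations of `E` lie in degree `1`, so `τ` kills them
and descends to a graded `r : E → M`; since `r` agrees with `ρ` in degree `0`, where `M` is
generated, it retracts `f`.
-/

namespace GrMod

variable {A : Type} [Ring A] [Algebra ℂ A] {𝒜 : ℕ → Submodule ℂ A}

noncomputable def proj (X : GrMod 𝒜) (k : ℤ) : X.M →ₗ[ℂ] X.M :=
  (X.gr k).subtype ∘ₗ DirectSum.component ℂ ℤ (fun i => X.gr i) k ∘ₗ
    (LinearEquiv.ofBijective (DirectSum.coeLinearMap X.gr) X.decomp).symm.toLinearMap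

variable (X : GrMod 𝒜)

lemma proj_eq (k : ℤ) (m : X.M) :
    X.proj k m = (LinearEquiv.ofBijective (DirectSum.coeLinearMap X.gr) X.decomp).symm m k :=
  rfl

lemma proj_mem (k : ℤ) (m : X.M) : X.proj k m ∈ X.gr k :=
  Submodule.coe_mem _

lemma proj_of_mem {k : ℤ} {m : X.M} (h : m ∈ X.gr k) : X.proj k m = m := by
  rw [proj_eq, X.decomp.ofBijective_coeLinearMap_of_mem h]

lemma proj_of_ne {j k : ℤ} {m : X.M} (h : m ∈ X.gr j) (hjk : j ≠ k) : X.proj k m = 0 := by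
  rw [proj_eq, X.decomp.ofBijective_coeLinearMap_of_mem_ne hjk h, ZeroMemClass.coe_zero]

@[elab_as_elim]
lemma induction_on_homogeneous {P : X.M → Prop} (m : X.M) (zero : P 0)
    (add : ∀ x y, P x → P y → P (x + y)) (mem : ∀ i, ∀ x ∈ X.gr i, P x) : P m :=
  Submodule.iSup_induction X.gr (motive := P)
    (X.decomp.submodule_iSup_eq_top ▸ Submodule.mem_top) mem zero add

lemma proj_add_smul {d : ℕ} {s : A} (hs : s ∈ 𝒜 d) (k : ℤ) (m : X.M) :
    X.proj (k + d) (s • m) = s • X.proj k m := by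
  induction m using X.induction_on_homogeneous with
  | zero => simp
  | add x y hx hy => rw [smul_add, map_add, map_add, smul_add, hx, hy]
  | mem i m hm =>
    have hsm := X.smul_mem' d i s hs m hm
    by_cases hik : i = k
    · subst hik
      rw [X.proj_of_mem hm, X.proj_of_mem hsm]
    · rw [X.proj_of_ne hm hik, smul_zero, X.proj_of_ne hsm (by omega)]

end GrMod

namespace GrHom

variable {A : Type} [Ring A] [Algebra ℂ A] {𝒜 : ℕ → Submodule ℂ A} {X Y Z : GrMod 𝒜}

lemma proj_apply (φ : GrHom X Y) (k : ℤ) (m : X.M) :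
    Y.proj k (φ.toFun m) = φ.toFun (X.proj k m) := by
  induction m using X.induction_on_homogeneous with
  | zero => simp
  | add x y hx hy => rw [map_add, map_add, map_add, map_add, hx, hy]
  | mem i m hm =>
    by_cases hik : i = k
    · subst hik
      rw [X.proj_of_mem hm, Y.proj_of_mem (φ.map_gr i m hm)]
    · rw [X.proj_of_ne hm hik, map_zero, Y.proj_of_ne (φ.map_gr i m hm) hik]

lemma exists_mem_gr_of_surjective (p : GrHom X Y) (hp : Function.Surjective p.toFun)
    {k : ℤ} {y : Y.M} (hy : y ∈ Y.gr k) : ∃ x ∈ X.gr k, p.toFun x = y := by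
  obtain ⟨x, rfl⟩ := hp y
  exact ⟨X.proj k x, X.proj_mem k x, by rw [← p.proj_apply, Y.proj_of_mem hy]⟩

lemma exists_comp_eq_of_ker_le (p : GrHom X Y) (hp : Function.Surjective p.toFun)
    (φ : GrHom X Z) (h : LinearMap.ker p.toFun ≤ LinearMap.ker φ.toFun) :
    ∃ r : GrHom Y Z, r.comp p = φ := by
  let r : Y.M →ₗ[A] Z.M :=
    (LinearMap.ker p.toFun).liftQ φ.toFun h ∘ₗ
      (p.toFun.quotKerEquivOfSurjective hp).symm.toLinearMap
  have hr : ∀ x, r (p.toFun x) = φ.toFun x := fun x => by simp [r]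
  refine ⟨⟨r, fun i y hy => ?_⟩, GrHom.ext (LinearMap.ext hr)⟩
  obtain ⟨x, hx, rfl⟩ := p.exists_mem_gr_of_surjective hp hy
  exact hr x ▸ φ.map_gr i x hx

end GrHom

section Polynomial

open MvPolynomial

variable {n : ℕ}

lemma homogeneousComponent_eq_zero_of_mem_polyJ_pow {d e : ℕ} {s : PolyRing n}
    (hs : s ∈ polyJ n ^ d) (he : e < d) : homogeneousComponent e s = 0 := by
  ext u
  rw [coeff_homogeneousComponent, coeff_zero]
  split_ifs with hu
  · exact (mem_pow_idealOfVars_iff' d s).mp hs u (hu ▸ he)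
  · rfl

lemma mem_polyJ_pow_of_mem_polyGrading {d : ℕ} {s : PolyRing n} (hs : s ∈ polyGrading n d) :
    s ∈ polyJ n ^ d :=
  (mem_pow_idealOfVars_iff d s).mpr fun _ hu => by
    rw [Finsupp.degree_eq_weight_one]
    exact ((mem_homogeneousSubmodule _ _).mp hs (mem_support_iff.mp hu)).ge

end Polynomial

namespace GrMod

open MvPolynomial

variable {n : ℕ} (X : GrMod (polyGrading n))

lemma proj_smul (a : PolyRing n) (k : ℤ) (m : X.M) :
    X.proj k (a • m) =
      ∑ d ∈ Finset.range (a.totalDegree + 1), homogeneousComponent d a • X.proj (k - d) m := by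
  conv_lhs => rw [← sum_homogeneousComponent a, Finset.sum_smul, map_sum]
  refine Finset.sum_congr rfl fun d _ => ?_
  simpa using X.proj_add_smul (homogeneousComponent_isHomogeneous d a) (k - d) m

lemma proj_smul_of_mem_gr_zero {g : X.M} (hg : g ∈ X.gr 0) (a : PolyRing n) (k : ℕ) :
    X.proj k (a • g) = homogeneousComponent k a • g := by
  rw [proj_smul, Finset.sum_eq_single k]
  · rw [sub_self, X.proj_of_mem hg]
  · intro d _ hdk
    rw [X.proj_of_ne hg (by omega), smul_zero]
  · intro hk
    rw [homogeneousComponent_eq_zero k a (by simpa using hk), zero_smul]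

lemma proj_smul_of_mem_gr_zero_of_neg {g : X.M} (hg : g ∈ X.gr 0) (a : PolyRing n) {k : ℤ}
    (hk : k < 0) : X.proj k (a • g) = 0 := by
  rw [proj_smul]
  exact Finset.sum_eq_zero fun d _ => by rw [X.proj_of_ne hg (by omega), smul_zero]

lemma proj_eq_zero_of_mem_pow_smul (hX : ∀ j < 0, X.gr j = ⊥) {d : ℕ} {m : X.M}
    (hm : m ∈ (polyJ n ^ d) • (⊤ : Submodule (PolyRing n) X.M)) {k : ℤ} (hk : k < d) :
    X.proj k m = 0 := by
  refine Submodule.smul_induction_on hm (fun s hs m _ => ?_) fun x y hx hy => ?_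
  · rw [proj_smul]
    refine Finset.sum_eq_zero fun e _ => ?_
    by_cases he : e < d
    · rw [homogeneousComponent_eq_zero_of_mem_polyJ_pow hs he, zero_smul]
    · have h := X.proj_mem (k - e) m
      rw [hX _ (by omega), Submodule.mem_bot] at h
      rw [h, smul_zero]
  · rw [map_add, hx, hy, add_zero]

def GenInDegreeZero : Prop :=
  Submodule.span (PolyRing n) (X.gr 0 : Set X.M) = ⊤

variable {X}

namespace GenInDegreeZero

lemma exists_sum_smul_eq (hX : X.GenInDegreeZero) (x : X.M) :
    ∃ (m : ℕ) (a : Fin m → PolyRing n) (g : Fin m → X.gr 0), ∑ i, a i • (g i : X.M) = x :=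
  Submodule.mem_span_set'.mp (hX ▸ Submodule.mem_top)

lemma gr_eq_bot_of_neg (hX : X.GenInDegreeZero) {k : ℤ} (hk : k < 0) : X.gr k = ⊥ := by
  refine (Submodule.eq_bot_iff _).mpr fun x hx => ?_
  obtain ⟨m, a, g, rfl⟩ := hX.exists_sum_smul_eq x
  rw [← X.proj_of_mem hx, map_sum]
  exact Finset.sum_eq_zero fun i _ => X.proj_smul_of_mem_gr_zero_of_neg (g i).2 (a i) hk

lemma mem_pow_smul_of_mem_gr (hX : X.GenInDegreeZero) {k : ℕ} {x : X.M} (hx : x ∈ X.gr k) :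
    x ∈ (polyJ n ^ k) • (⊤ : Submodule (PolyRing n) X.M) := by
  obtain ⟨m, a, g, rfl⟩ := hX.exists_sum_smul_eq x
  rw [← X.proj_of_mem hx, map_sum]
  refine Submodule.sum_mem _ fun i _ => ?_
  rw [X.proj_smul_of_mem_gr_zero (g i).2]
  exact Submodule.smul_mem_smul
    (mem_polyJ_pow_of_mem_polyGrading (homogeneousComponent_isHomogeneous k _)) trivial

lemma sub_proj_zero_mem_smul (hX : X.GenInDegreeZero) (x : X.M) :
    x - X.proj 0 x ∈ polyJ n • (⊤ : Submodule (PolyRing n) X.M) := by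
  obtain ⟨m, a, g, rfl⟩ := hX.exists_sum_smul_eq x
  rw [map_sum, ← Finset.sum_sub_distrib]
  refine Submodule.sum_mem _ fun i _ => ?_
  have h0 := X.proj_smul_of_mem_gr_zero (g i).2 (a i) 0
  rw [Nat.cast_zero] at h0
  rw [h0, ← sub_smul]
  refine Submodule.smul_mem_smul ?_ trivial
  have h1 : a i - homogeneousComponent 0 (a i) ∈ polyJ n ^ 1 :=
    (mem_pow_idealOfVars_iff' 1 _).mpr fun u hu => by
      rw [coeff_sub, coeff_homogeneousComponent, if_pos (by omega), sub_self]
  rwa [pow_one] at h1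

lemma of_basis {ι : Type} (b : Module.Basis ι (PolyRing n) X.M) (hb : ∀ j, b j ∈ X.gr 0) :
    X.GenInDegreeZero :=
  eq_top_iff.mpr (b.span_eq ▸ Submodule.span_mono (Set.range_subset_iff.mpr hb))

lemma of_surjective {P : GrMod (polyGrading n)} (hP : P.GenInDegreeZero) (p : GrHom P X)
    (hp : Function.Surjective p.toFun) : X.GenInDegreeZero := by
  rw [GenInDegreeZero, eq_top_iff, ← LinearMap.range_eq_top.mpr hp, LinearMap.range_eq_map, ← hP,
    Submodule.map_span]
  exact Submodule.span_mono (Set.image_subset_iff.mpr fun x hx => p.map_gr 0 x hx)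

end GenInDegreeZero

lemma _root_.HasLinearPresentation.genInDegreeZero (hX : HasLinearPresentation X) :
    X.GenInDegreeZero := by
  obtain ⟨_, _, _, p, _, ⟨_, b, hb⟩, hp, _⟩ := hX
  exact (GenInDegreeZero.of_basis b hb).of_surjective p hp

lemma map_mem_gr_of_span_eq_top {Y : GrMod (polyGrading n)} {G : Set X.M}
    (hG : Submodule.span (PolyRing n) G = ⊤) (hGX : G ⊆ X.gr 0) (φ : X.M →ₗ[PolyRing n] Y.M)
    (hφ : ∀ g ∈ G, φ g ∈ Y.gr 0) {k : ℤ} {x : X.M} (hx : x ∈ X.gr k) : φ x ∈ Y.gr k := by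
  have hcomm : ∀ (j : ℤ) (x : X.M), Y.proj j (φ x) = φ (X.proj j x) := fun j x => by
    induction (hG ▸ Submodule.mem_top : x ∈ Submodule.span (PolyRing n) G)
      using Submodule.span_induction generalizing j with
    | mem g hg =>
      by_cases hj : 0 = j
      · subst hj
        rw [X.proj_of_mem (hGX hg), Y.proj_of_mem (hφ g hg)]
      · rw [X.proj_of_ne (hGX hg) hj, Y.proj_of_ne (hφ g hg) hj, map_zero]
    | zero => simp
    | add x y _ _ hx hy => rw [map_add, map_add, map_add, map_add, hx, hy]
    | smul a x _ hx => simp only [map_smul, proj_smul, map_sum, hx]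
  rw [← X.proj_of_mem hx, ← hcomm]
  exact Y.proj_mem k _

end GrMod

namespace GrHom

variable {n : ℕ} {ι : Type} {P M : GrMod (polyGrading n)}
  (b : Module.Basis ι (PolyRing n) P.M) (hb : ∀ j, b j ∈ P.gr 0)

noncomputable def ofBasis (v : ι → M.M) (hv : ∀ j, v j ∈ M.gr 0) : GrHom P M :=
  ⟨b.constr ℕ v, fun _ _ => GrMod.map_mem_gr_of_span_eq_top b.span_eq
    (Set.range_subset_iff.mpr hb) _ (Set.forall_mem_range.mpr fun j => by simpa using hv j)⟩

/-- The difference of the two maps sends `P_k ⊆ J^k P` into `J^(k+1) M`, which has no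
component in degree `k`. -/
lemma ofBasis_proj_zero_apply (hM : M.GenInDegreeZero) (m : ι → M.M) {k : ℕ} {w : P.M}
    (hw : w ∈ P.gr k) :
    (ofBasis b hb (fun j => M.proj 0 (m j)) fun _ => M.proj_mem 0 _).toFun w =
      M.proj k (b.constr ℕ m w) := by
  set τ := ofBasis b hb (fun j => M.proj 0 (m j)) fun _ => M.proj_mem 0 _
  set δ := b.constr ℕ m - τ.toFun
  have hδ : LinearMap.range δ ≤ polyJ n • ⊤ := by
    have : δ = b.constr ℕ fun j => m j - M.proj 0 (m j) := b.ext fun j => by simp [δ, τ, ofBasis]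
    rw [this, Module.Basis.constr_range, Submodule.span_le]
    rintro _ ⟨j, rfl⟩
    exact hM.sub_proj_zero_mem_smul (m j)
  have hδw : δ w ∈ polyJ n ^ (k + 1) • (⊤ : Submodule (PolyRing n) M.M) := by
    have := Submodule.mem_map_of_mem (f := δ)
      ((GrMod.GenInDegreeZero.of_basis b hb).mem_pow_smul_of_mem_gr hw)
    rw [Submodule.map_smul'', ← LinearMap.range_eq_map] at this
    rw [pow_succ, Submodule.mul_smul]
    exact Submodule.smul_mono le_rfl hδ this
  have h0 := M.proj_eq_zero_of_mem_pow_smul (fun _ => hM.gr_eq_bot_of_neg) hδw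
    (k := k) (by omega)
  rw [LinearMap.sub_apply, map_sub, sub_eq_zero, M.proj_of_mem (τ.map_gr k w hw)] at h0
  exact h0.symm

end GrHom

section Reduction

variable {n : ℕ} {X Y Z : GrMod (polyGrading n)}

lemma redMap_apply (f : GrHom X Y) (x : X.M) :
    redMap f (Submodule.Quotient.mk x) = Submodule.Quotient.mk (f.toFun x) :=
  rfl

lemma redMap_comp (g : GrHom Y Z) (f : GrHom X Y) :
    redMap (g.comp f) = redMap g ∘ₗ redMap f :=
  Submodule.linearMap_qext _ rfl

lemma redMap_id : redMap (GrHom.id X) = LinearMap.id :=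
  Submodule.linearMap_qext _ rfl

lemma exists_retraction_of_redMap {M E : GrMod (polyGrading n)} (hM : M.GenInDegreeZero)
    (hE : HasLinearPresentation E) (f : GrHom M E)
    (ρ : (E.M ⧸ JsqSub n E) →ₗ[PolyRing n] (M.M ⧸ JsqSub n M))
    (hρ : ρ ∘ₗ redMap f = LinearMap.id) :
    ∃ r : GrHom E M, r.comp f = GrHom.id M := by
  obtain ⟨_, P₀, d, p, ⟨_, c, hc⟩, ⟨_, b, hb⟩, hp, hdp⟩ := hE
  have hMneg : ∀ j < 0, M.gr j = ⊥ := fun _ => hM.gr_eq_bot_of_neg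
  choose m hm using fun j =>
    Submodule.Quotient.mk_surjective (JsqSub n M) (ρ (Submodule.Quotient.mk (p.toFun (b j))))
  set σ := b.constr ℕ m
  set τ := GrHom.ofBasis b hb (fun j => M.proj 0 (m j)) fun _ => M.proj_mem 0 _
  have hσ : ∀ w, Submodule.Quotient.mk (σ w) =
      ρ (Submodule.Quotient.mk (p.toFun w) : E.M ⧸ JsqSub n E) := fun w =>
    LinearMap.congr_fun (b.ext (f₁ := (JsqSub n M).mkQ ∘ₗ σ)
      (f₂ := ρ ∘ₗ (JsqSub n E).mkQ ∘ₗ p.toFun) fun j => by simp [σ, hm]) w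
  have hker : LinearMap.ker p.toFun ≤ LinearMap.ker τ.toFun := by
    rw [← hdp, LinearMap.range_eq_map, ← c.span_eq, Submodule.map_span, Submodule.span_le]
    rintro _ ⟨_, ⟨t, rfl⟩, rfl⟩
    have hdt : d.toFun (c t) ∈ P₀.gr (1 : ℕ) := d.map_gr 1 _ (hc t)
    have hpdt : p.toFun (d.toFun (c t)) = 0 := by
      rw [← LinearMap.mem_ker, ← hdp]
      exact LinearMap.mem_range_self d.toFun (c t)
    have hJ : σ (d.toFun (c t)) ∈ JsqSub n M := by
      rw [← Submodule.Quotient.mk_eq_zero, hσ, hpdt, Submodule.Quotient.mk_zero, map_zero]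
    rw [SetLike.mem_coe, LinearMap.mem_ker, GrHom.ofBasis_proj_zero_apply b hb hM m hdt]
    exact M.proj_eq_zero_of_mem_pow_smul hMneg hJ (by norm_num)
  obtain ⟨r, hr⟩ := p.exists_comp_eq_of_ker_le hp τ hker
  refine ⟨r, GrHom.ext (LinearMap.ext_on hM fun x hx => ?_)⟩
  obtain ⟨w, hw, hwx⟩ := p.exists_mem_gr_of_surjective hp (f.map_gr 0 x hx)
  have hJ : σ w - x ∈ JsqSub n M := by
    rw [← Submodule.Quotient.eq, hσ, hwx, ← redMap_apply, ← LinearMap.comp_apply, hρ,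
      LinearMap.id_apply]
  have h0 := M.proj_eq_zero_of_mem_pow_smul hMneg hJ (k := 0) (by norm_num)
  rw [map_sub, sub_eq_zero, M.proj_of_mem hx] at h0
  calc r.toFun (f.toFun x) = τ.toFun w := by
        rw [← hwx]
        exact LinearMap.congr_fun (congrArg GrHom.toFun hr) w
    _ = M.proj 0 (σ w) := GrHom.ofBasis_proj_zero_apply b hb hM m (k := 0) hw
    _ = x := h0

end Reduction

theorem stmt4_general {n : ℕ} (M E N : GrMod (polyGrading n))
    (hM : HasLinearPresentation M) (hE : HasLinearPresentation E)
    (f : GrHom M E) (g : GrHom E N) :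
    Splits f g ↔
      ∃ ρ : (E.M ⧸ JsqSub n E) →ₗ[PolyRing n] (M.M ⧸ JsqSub n M),
        ρ ∘ₗ redMap f = LinearMap.id := by
  constructor
  · rintro ⟨r, hr⟩
    exact ⟨redMap r, by rw [← redMap_comp, hr, redMap_id]⟩
  · rintro ⟨ρ, hρ⟩
    exact exists_retraction_of_redMap hM.genInDegreeZero hE f ρ hρ

/-- Lemma 1.1: a short exact sequence `0 → M → E → N → 0` of graded `S`-modules
with linear presentations splits if and only if the induced short exact sequence
`0 → M/J²M → E/J²E → N/J²N → 0` of `S/J²`-modules splits. -/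
theorem stmt4 {n : ℕ} (M E N : GrMod (polyGrading n))
    (hM : HasLinearPresentation M) (hE : HasLinearPresentation E)
    (hN : HasLinearPresentation N)
    (f : GrHom M E) (g : GrHom E N) (hses : IsSES f g) :
    Splits f g ↔
      ∃ ρ : (E.M ⧸ JsqSub n E) →ₗ[PolyRing n] (M.M ⧸ JsqSub n M),
        ρ ∘ₗ redMap f = LinearMap.id :=
  stmt4_general M E N hM hE f g
end
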